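/- In the rank-1 heterogeneous random graph with w_{ij} = w_i w_j (w_i∈[β,1]) and w = ∑_i w_i, the following asymptotics hold uniformly in the indices: μ_i = w p_n w_i (1 + O(1/n)), η_i = 1/(w² p_n) + O(1/(n³ p_n)), γ_{ij} = 1/(w² p_n) + O(1/(n³ p_n)); consequently v_{1n}² = (n³/(6 w⁶ p_n³))(1+o(1)), v_{2n}² = O(1/(n⁴ p_n)), and v_{2n}² = o(v_{1n}²). -/

import Mathlib

open MeasureTheory ProbabilityTheory Filter Finset Topology

noncomputable section

namespace HetRG

/-- The edge-probability scale `p_n = n^{-α}`. -/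
def pn (α : ℝ) (n : ℕ) : ℝ := (n : ℝ) ^ (-α)

/-- `δ_n = (log (n p_n))^{-2}`. -/
def deltan (α : ℝ) (n : ℕ) : ℝ := (Real.log ((n : ℝ) * pn α n) ^ 2)⁻¹

/-- The heterogeneous Erdős–Rényi random graph `G_n(α, β, W)`: `A` is a symmetric
random 0-1 adjacency matrix with zero diagonal, the entries `A i j` for `i < j` are
independent Bernoulli with success probability `μ_{ij} = p_n * w i j`, where the
symmetric weight array `w` has zero diagonal and off-diagonal entries in `[β, 1]`. -/
structure IsHetRG (α β : ℝ) {Ω : Type} [MeasureSpace Ω] (n : ℕ)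
    (w : Fin n → Fin n → ℝ) (A : Fin n → Fin n → Ω → ℝ) : Prop where
  isProb : IsProbabilityMeasure (volume : Measure Ω)
  meas : ∀ i j, Measurable (A i j)
  wSymm : ∀ i j, w i j = w j i
  wDiag : ∀ i, w i i = 0
  wMem : ∀ i j, i ≠ j → w i j ∈ Set.Icc β 1
  aSymm : ∀ i j, A i j = A j i
  aDiag : ∀ i ω, A i i ω = 0
  aVal : ∀ i j ω, A i j ω = 0 ∨ A i j ω = 1
  aBern : ∀ i j, i ≠ j → volume {ω | A i j ω = 1} = ENNReal.ofReal (pn α n * w i j)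
  aIndep : iIndepFun
      (fun p : {p : Fin n × Fin n // p.1 < p.2} => A p.1.1 p.1.2) volume

variable {Ω : Type} [MeasureSpace Ω]

/-- `μ_{ij} = p_n w_{ij}`. -/
def muij (α : ℝ) {n : ℕ} (w : Fin n → Fin n → ℝ) (i j : Fin n) : ℝ := pn α n * w i j

/-- `μ_i = ∑_j μ_{ij}`. -/
def mui (α : ℝ) {n : ℕ} (w : Fin n → Fin n → ℝ) (i : Fin n) : ℝ := ∑ j, muij α w i j

/-- The degree `d_i = ∑_j A_{ij}`. -/
def deg {n : ℕ} (A : Fin n → Fin n → Ω → ℝ) (i : Fin n) (ω : Ω) : ℝ := ∑ j, A i j ω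

/-- The centered entry `Ā_{ij} = A_{ij} - μ_{ij}`. -/
def abar (α : ℝ) {n : ℕ} (w : Fin n → Fin n → ℝ) (A : Fin n → Fin n → Ω → ℝ)
    (i j : Fin n) (ω : Ω) : ℝ := A i j ω - muij α w i j

/-- `t_i = ∑_{j ≠ k} A_{ij} A_{jk} A_{ki}`. -/
def tri {n : ℕ} (A : Fin n → Fin n → Ω → ℝ) (i : Fin n) (ω : Ω) : ℝ :=
  ∑ j, ∑ k, if j ≠ k then A i j ω * A j k ω * A k i ω else 0

/-- `∑_{j ≠ k} A_{ij} A_{ik}`, the denominator in the clustering coefficient. -/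
def wedge {n : ℕ} (A : Fin n → Fin n → Ω → ℝ) (i : Fin n) (ω : Ω) : ℝ :=
  ∑ j, ∑ k, if j ≠ k then A i j ω * A i k ω else 0

/-- The average clustering coefficient `C̄_n` (summands with zero denominator are zero,
by the junk-value convention `x / 0 = 0`). -/
def clust {n : ℕ} (A : Fin n → Fin n → Ω → ℝ) (ω : Ω) : ℝ :=
  (n : ℝ)⁻¹ * ∑ i, tri A i ω / wedge A i ω

/-- `a_i = E[1/(d_i (d_i - 1))]`, with the convention that the integrand is `0`
when `d_i ∈ {0, 1}` (junk value `0⁻¹ = 0`). -/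
def ai {n : ℕ} (A : Fin n → Fin n → Ω → ℝ) (i : Fin n) : ℝ :=
  ∫ ω, (deg A i ω * (deg A i ω - 1))⁻¹

/-- `E[t_i]`. -/
def Etri {n : ℕ} (A : Fin n → Fin n → Ω → ℝ) (i : Fin n) : ℝ := ∫ ω, tri A i ω

/-- `b_i = E[t_i] (2μ_i - 1) / (μ_i² (μ_i - 1)²)`. -/
def bi (α : ℝ) {n : ℕ} (w : Fin n → Fin n → ℝ) (A : Fin n → Fin n → Ω → ℝ) (i : Fin n) : ℝ :=
  Etri A i * (2 * mui α w i - 1) / (mui α w i ^ 2 * (mui α w i - 1) ^ 2)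

/-- `c_{ij} = ∑_{k ≠ i,j} a_k μ_{ki} μ_{kj}`. -/
def cij (α : ℝ) {n : ℕ} (w : Fin n → Fin n → ℝ) (A : Fin n → Fin n → Ω → ℝ)
    (i j : Fin n) : ℝ :=
  ∑ k, if k ≠ i ∧ k ≠ j then ai A k * muij α w k i * muij α w k j else 0

/-- `d_{ij} = ∑_{k ≠ i,j} μ_{ki} μ_{kj}`. -/
def dij (α : ℝ) {n : ℕ} (w : Fin n → Fin n → ℝ) (i j : Fin n) : ℝ :=
  ∑ k, if k ≠ i ∧ k ≠ j then muij α w k i * muij α w k j else 0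

/-- `e_{ij} = 2 c_{ij} + 2 (a_i d_{ij} + a_j d_{ji}) - b_i - b_j`. -/
def eij (α : ℝ) {n : ℕ} (w : Fin n → Fin n → ℝ) (A : Fin n → Fin n → Ω → ℝ)
    (i j : Fin n) : ℝ :=
  2 * cij α w A i j + 2 * (ai A i * dij α w i j + ai A j * dij α w j i)
    - bi α w A i - bi α w A j

/-- `a_{ijk} = a_i + a_j + a_k`. -/
def aijk {n : ℕ} (A : Fin n → Fin n → Ω → ℝ) (i j k : Fin n) : ℝ := ai A i + ai A j + ai A k

/-- `σ_{1n}² = (4/n²) ∑_{i<j<k} a_{ijk}² μ_{ij}(1-μ_{ij}) μ_{jk}(1-μ_{jk}) μ_{ki}(1-μ_{ki})`. -/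
def sigma1sq (α : ℝ) {n : ℕ} (w : Fin n → Fin n → ℝ) (A : Fin n → Fin n → Ω → ℝ) : ℝ :=
  4 / (n : ℝ) ^ 2 * ∑ i, ∑ j, ∑ k, if i < j ∧ j < k then
    aijk A i j k ^ 2 * (muij α w i j * (1 - muij α w i j)) *
      (muij α w j k * (1 - muij α w j k)) * (muij α w k i * (1 - muij α w k i)) else 0

/-- `σ_{2n}² = (4/n²) ∑_{i<j} e_{ij}² μ_{ij}(1-μ_{ij})`. -/
def sigma2sq (α : ℝ) {n : ℕ} (w : Fin n → Fin n → ℝ) (A : Fin n → Fin n → Ω → ℝ) : ℝ :=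
  4 / (n : ℝ) ^ 2 * ∑ i, ∑ j, if i < j then
    eij α w A i j ^ 2 * (muij α w i j * (1 - muij α w i j)) else 0

/-- The sum of weighted triangles `T_n = ∑_{i<j<k} A_{ij}A_{jk}A_{ki}/(d_i d_j d_k)`
(summands with zero denominator are zero by the junk-value convention). -/
def Tn {n : ℕ} (A : Fin n → Fin n → Ω → ℝ) (ω : Ω) : ℝ :=
  ∑ i, ∑ j, ∑ k, if i < j ∧ j < k then
    A i j ω * A j k ω * A k i ω / (deg A i ω * deg A j ω * deg A k ω) else 0

/-- `η_i = ∑_{j ≠ k} μ_{ij} μ_{jk} μ_{ki} / (μ_i² μ_j μ_k)`. -/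
def etai (α : ℝ) {n : ℕ} (w : Fin n → Fin n → ℝ) (i : Fin n) : ℝ :=
  ∑ j, ∑ k, if j ≠ k then
    muij α w i j * muij α w j k * muij α w k i /
      (mui α w i ^ 2 * mui α w j * mui α w k) else 0

/-- `γ_{ij} = ∑_{k ∉ {i,j}} μ_{jk} μ_{ki} / (μ_i μ_j μ_k)`. -/
def gammaij (α : ℝ) {n : ℕ} (w : Fin n → Fin n → ℝ) (i j : Fin n) : ℝ :=
  ∑ k, if k ≠ i ∧ k ≠ j then
    muij α w j k * muij α w k i / (mui α w i * mui α w j * mui α w k) else 0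

/-- `v_{1n}² = ∑_{i<j<k} μ_{ij}(1-μ_{ij}) μ_{jk}(1-μ_{jk}) μ_{ki}(1-μ_{ki}) / (μ_i² μ_j² μ_k²)`. -/
def v1sq (α : ℝ) {n : ℕ} (w : Fin n → Fin n → ℝ) : ℝ :=
  ∑ i, ∑ j, ∑ k, if i < j ∧ j < k then
    muij α w i j * (1 - muij α w i j) * (muij α w j k * (1 - muij α w j k)) *
      (muij α w k i * (1 - muij α w k i)) /
      (mui α w i ^ 2 * mui α w j ^ 2 * mui α w k ^ 2) else 0

/-- `v_{2n}² = ∑_{i<j} (γ_{ij} - (η_i + η_j)/2)² μ_{ij}(1-μ_{ij})`. -/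
def v2sq (α : ℝ) {n : ℕ} (w : Fin n → Fin n → ℝ) : ℝ :=
  ∑ i, ∑ j, if i < j then
    (gammaij α w i j - (etai α w i + etai α w j) / 2) ^ 2 *
      (muij α w i j * (1 - muij α w i j)) else 0

/-- Convergence in distribution to the standard normal law `N(0,1)`, phrased as
pointwise convergence of the CDFs (every point is a continuity point of the
standard Gaussian CDF). -/
def CDFTendstoGaussian (X : ℕ → Ω → ℝ) : Prop :=
  ∀ x : ℝ, Tendsto (fun n => (volume {ω | X n ω ≤ x}).toReal) atTop
    (𝓝 ((gaussianReal 0 1 (Set.Iic x)).toReal))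

/-- `X_n = o_P(r_n)`: `X_n / r_n → 0` in probability. -/
def IsoP (X : ℕ → Ω → ℝ) (r : ℕ → ℝ) : Prop :=
  ∀ ε : ℝ, 0 < ε →
    Tendsto (fun n => (volume {ω | ε * |r n| < |X n ω|}).toReal) atTop (𝓝 0)

/-- The Erdős–Rényi weight array: all off-diagonal weights equal to `c`. -/
def wER (c : ℝ) (n : ℕ) : Fin n → Fin n → ℝ := fun i j => if i = j then 0 else c

/-- The rank-1 weight array `w_{ij} = w_i w_j` (zero on the diagonal). -/
def wRank1 {n : ℕ} (v : Fin n → ℝ) : Fin n → Fin n → ℝ :=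
  fun i j => if i = j then 0 else v i * v j

section Aux

private lemma sum_if_ne {n : ℕ} (i : Fin n) (f : Fin n → ℝ) :
    ∑ j, (if i = j then (0:ℝ) else f j) = (∑ j, f j) - f i := by
  have h : ∀ j, (if i = j then (0:ℝ) else f j) = f j - (if i = j then f j else 0) := by
    intro j; by_cases h : i = j <;> simp [h]
  simp only [h, Finset.sum_sub_distrib, Finset.sum_ite_eq, Finset.mem_univ, if_true]

private lemma muij_rank1 {n : ℕ} (α : ℝ) (v : Fin n → ℝ) (i j : Fin n) :
    muij α (wRank1 v) i j = if i = j then 0 else pn α n * (v i * v j) := by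
  simp only [muij, wRank1]
  split <;> simp

private lemma mui_rank1 {n : ℕ} (α : ℝ) (v : Fin n → ℝ) (i : Fin n) :
    mui α (wRank1 v) i = pn α n * (v i * ((∑ l, v l) - v i)) := by
  unfold mui
  rw [Finset.sum_congr rfl (fun j _ => muij_rank1 α v i j), sum_if_ne]
  have : ∀ j, pn α n * (v i * v j) = pn α n * v i * v j := fun j => by ring
  simp only [this, ← Finset.mul_sum]
  ring

private lemma count2 (n : ℕ) :
    ∑ i ∈ Finset.range n, ∑ j ∈ Finset.range n, (if i < j then (1:ℝ) else 0)
      = n * (n - 1) / 2 := by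
  induction n with
  | zero => simp
  | succ n ih =>
    rw [Finset.sum_range_succ]
    have h1 : ∑ j ∈ Finset.range (n+1), (if n < j then (1:ℝ) else 0) = 0 :=
      Finset.sum_eq_zero (fun j hj => by
        rw [Finset.mem_range] at hj; rw [if_neg (by omega)])
    rw [h1, add_zero]
    have h2 : ∀ i ∈ Finset.range n,
        (∑ j ∈ Finset.range (n+1), (if i < j then (1:ℝ) else 0))
          = (∑ j ∈ Finset.range n, (if i < j then (1:ℝ) else 0)) + 1 := by
      intro i hi
      rw [Finset.sum_range_succ, if_pos (Finset.mem_range.mp hi)]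
    rw [Finset.sum_congr rfl h2, Finset.sum_add_distrib, ih]
    simp only [Finset.sum_const, Finset.card_range, nsmul_eq_mul, mul_one]
    push_cast
    ring

private lemma count3 (n : ℕ) :
    ∑ i ∈ Finset.range n, ∑ j ∈ Finset.range n, ∑ k ∈ Finset.range n,
      (if i < j ∧ j < k then (1:ℝ) else 0) = n * (n - 1) * (n - 2) / 6 := by
  induction n with
  | zero => simp
  | succ n ih =>
    rw [Finset.sum_range_succ]
    have h1 : ∑ j ∈ Finset.range (n+1), ∑ k ∈ Finset.range (n+1),
        (if n < j ∧ j < k then (1:ℝ) else 0) = 0 :=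
      Finset.sum_eq_zero (fun j hj => Finset.sum_eq_zero (fun k hk => by
        rw [Finset.mem_range] at hj hk; rw [if_neg (by omega)]))
    rw [h1, add_zero]
    have h2 : ∀ i ∈ Finset.range n,
        (∑ j ∈ Finset.range (n+1), ∑ k ∈ Finset.range (n+1),
          (if i < j ∧ j < k then (1:ℝ) else 0))
        = (∑ j ∈ Finset.range n, ∑ k ∈ Finset.range n,
            (if i < j ∧ j < k then (1:ℝ) else 0))
          + (∑ j ∈ Finset.range n, (if i < j then (1:ℝ) else 0)) := by
      intro i hi
      rw [Finset.sum_range_succ]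
      have h3 : ∑ k ∈ Finset.range (n+1), (if i < n ∧ n < k then (1:ℝ) else 0) = 0 :=
        Finset.sum_eq_zero (fun k hk => by
          rw [Finset.mem_range] at hk; rw [if_neg (by omega)])
      rw [h3, add_zero]
      rw [← Finset.sum_add_distrib]
      refine Finset.sum_congr rfl (fun j hj => ?_)
      rw [Finset.sum_range_succ]
      congr 1
      rw [Finset.mem_range] at hj
      by_cases h : i < j
      · rw [if_pos ⟨h, hj⟩, if_pos h]
      · rw [if_neg (by tauto), if_neg h]
    rw [Finset.sum_congr rfl h2, Finset.sum_add_distrib, ih, count2]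
    push_cast
    ring

private lemma count3_fin (n : ℕ) :
    ∑ i : Fin n, ∑ j : Fin n, ∑ k : Fin n, (if i < j ∧ j < k then (1:ℝ) else 0)
      = n * (n - 1) * (n - 2) / 6 := by
  rw [← count3]
  simp only [Fin.lt_def]
  rw [Fin.sum_univ_eq_sum_range (fun i => ∑ j : Fin n, ∑ k : Fin n,
    (if i < j.1 ∧ j.1 < k.1 then (1:ℝ) else 0))]
  refine Finset.sum_congr rfl (fun i _ => ?_)
  rw [Fin.sum_univ_eq_sum_range (fun j => ∑ k : Fin n,
    (if i < j ∧ j < k.1 then (1:ℝ) else 0))]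
  refine Finset.sum_congr rfl (fun j _ => ?_)
  exact Fin.sum_univ_eq_sum_range (fun k => (if i < j ∧ j < k then (1:ℝ) else 0)) n

private lemma div_p_le (a b c d p : ℝ) (hp : 0 < p) (hb : 0 < b) (hd : 0 < d)
    (h : a * d ≤ c * b) : a / (b * p) ≤ c / (d * p) := by
  rw [div_le_div_iff₀ (mul_pos hb hp) (mul_pos hd hp)]
  calc a * (d * p) = (a * d) * p := by ring
    _ ≤ (c * b) * p := mul_le_mul_of_nonneg_right h hp.le
    _ = c * (b * p) := by ring

private lemma diff_bound4 (p W D a : ℝ) (hp : 0 < p) (hW : 2 ≤ W)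
    (hD1 : (W-1)^4 ≤ D) (hD2 : D ≤ W^4) (ha : 0 ≤ a) (ha1 : a ≤ 1) :
    |a / (D * p) - a / (W^4 * p)| ≤ 4 * W^3 / ((W-1)^4 * W^4 * p) := by
  have hW1 : (0:ℝ) < W - 1 := by linarith
  have hW0 : (0:ℝ) < W := by linarith
  have hD0 : 0 < D := lt_of_lt_of_le (pow_pos hW1 4) hD1
  have heq : a / (D * p) - a / (W^4 * p) = a * (W^4 - D) / (D * (W^4 * p)) := by
    field_simp
  rw [heq, abs_of_nonneg (div_nonneg (mul_nonneg ha (by linarith))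
    (mul_nonneg hD0.le (mul_nonneg (by positivity) hp.le)))]
  have hnum : a * (W^4 - D) ≤ 4 * W^3 := by nlinarith [pow_pos hW0 3]
  have h4 : (0:ℝ) ≤ 4 * W^3 := by positivity
  calc a * (W^4 - D) / (D * (W^4 * p)) ≤ (4 * W^3) / ((W-1)^4 * W^4 * p) := by
        apply div_le_div₀ h4 hnum (by positivity)
        calc (W-1)^4 * W^4 * p = (W-1)^4 * (W^4 * p) := by ring
          _ ≤ D * (W^4 * p) := mul_le_mul_of_nonneg_right hD1 (by positivity)

private lemma diff_bound3 (p W D a : ℝ) (hp : 0 < p) (hW : 2 ≤ W)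
    (hD1 : (W-1)^3 ≤ D) (hD2 : D ≤ W^3) (ha : 0 ≤ a) (ha1 : a ≤ 1) :
    |a / (D * p) - a / (W^3 * p)| ≤ 3 * W^2 / ((W-1)^3 * W^3 * p) := by
  have hW1 : (0:ℝ) < W - 1 := by linarith
  have hW0 : (0:ℝ) < W := by linarith
  have hD0 : 0 < D := lt_of_lt_of_le (pow_pos hW1 3) hD1
  have heq : a / (D * p) - a / (W^3 * p) = a * (W^3 - D) / (D * (W^3 * p)) := by
    field_simp
  rw [heq, abs_of_nonneg (div_nonneg (mul_nonneg ha (by linarith))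
    (mul_nonneg hD0.le (mul_nonneg (by positivity) hp.le)))]
  have hnum : a * (W^3 - D) ≤ 3 * W^2 := by nlinarith [pow_pos hW0 2]
  have h4 : (0:ℝ) ≤ 3 * W^2 := by positivity
  calc a * (W^3 - D) / (D * (W^3 * p)) ≤ (3 * W^2) / ((W-1)^3 * W^3 * p) := by
        apply div_le_div₀ h4 hnum (by positivity)
        calc (W-1)^3 * W^3 * p = (W-1)^3 * (W^3 * p) := by ring
          _ ≤ D * (W^3 * p) := mul_le_mul_of_nonneg_right hD1 (by positivity)

end Aux
section Aux2

private lemma pn_pos {α : ℝ} {n : ℕ} (hn : 0 < n) : 0 < pn α n :=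
  Real.rpow_pos_of_pos (by exact_mod_cast hn) _

private lemma pn_le_one {α : ℝ} (hα : 0 ≤ α) {n : ℕ} (hn : 1 ≤ n) : pn α n ≤ 1 :=
  Real.rpow_le_one_of_one_le_of_nonpos (by exact_mod_cast hn) (by linarith)

private lemma W_ge {β : ℝ} {n : ℕ} {v : Fin n → ℝ} (hv : ∀ i, v i ∈ Set.Icc β 1) :
    β * n ≤ ∑ l, v l := by
  calc β * n = ∑ _l : Fin n, β := by
        simp [Finset.sum_const, Finset.card_univ, mul_comm]
    _ ≤ ∑ l, v l := Finset.sum_le_sum (fun i _ => (hv i).1)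

private lemma W_le {β : ℝ} {n : ℕ} {v : Fin n → ℝ} (hv : ∀ i, v i ∈ Set.Icc β 1) :
    ∑ l, v l ≤ n := by
  calc (∑ l, v l) ≤ ∑ _l : Fin n, (1:ℝ) := Finset.sum_le_sum (fun i _ => (hv i).2)
    _ = n := by simp

private lemma D4_bounds {W a b c : ℝ} (hW : 2 ≤ W)
    (ha : 0 ≤ a) (ha1 : a ≤ 1) (hb : 0 ≤ b) (hb1 : b ≤ 1) (hc : 0 ≤ c) (hc1 : c ≤ 1) :
    (W-1)^4 ≤ (W-a)^2 * ((W-b) * (W-c)) ∧ (W-a)^2 * ((W-b) * (W-c)) ≤ W^4 := by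
  have h0 : (0:ℝ) ≤ W - 1 := by linarith
  constructor
  · calc (W-1)^4 = (W-1)^2 * ((W-1) * (W-1)) := by ring
      _ ≤ (W-a)^2 * ((W-b) * (W-c)) := by
          apply mul_le_mul (pow_le_pow_left₀ h0 (by linarith) 2)
            (mul_le_mul (by linarith) (by linarith) h0 (by linarith))
            (mul_nonneg h0 h0) (sq_nonneg _)
  · calc (W-a)^2 * ((W-b) * (W-c)) ≤ W^2 * (W * W) := by
          apply mul_le_mul (pow_le_pow_left₀ (by linarith) (by linarith) 2)
            (mul_le_mul (by linarith) (by linarith) (by linarith) (by linarith))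
            (mul_nonneg (by linarith) (by linarith)) (sq_nonneg _)
      _ = W^4 := by ring

private lemma D3_bounds {W a b c : ℝ} (hW : 2 ≤ W)
    (ha : 0 ≤ a) (ha1 : a ≤ 1) (hb : 0 ≤ b) (hb1 : b ≤ 1) (hc : 0 ≤ c) (hc1 : c ≤ 1) :
    (W-1)^3 ≤ (W-a) * ((W-b) * (W-c)) ∧ (W-a) * ((W-b) * (W-c)) ≤ W^3 := by
  have h0 : (0:ℝ) ≤ W - 1 := by linarith
  constructor
  · calc (W-1)^3 = (W-1) * ((W-1) * (W-1)) := by ring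
      _ ≤ (W-a) * ((W-b) * (W-c)) := by
          apply mul_le_mul (by linarith)
            (mul_le_mul (by linarith) (by linarith) h0 (by linarith))
            (mul_nonneg h0 h0) (by linarith)
  · calc (W-a) * ((W-b) * (W-c)) ≤ W * (W * W) := by
          apply mul_le_mul (by linarith)
            (mul_le_mul (by linarith) (by linarith) (by linarith) (by linarith))
            (mul_nonneg (by linarith) (by linarith)) (by linarith)
      _ = W^3 := by ring

private lemma mu_bound (α β : ℝ) {n : ℕ} (hβ0 : 0 < β)
    (v : Fin n → ℝ) (hv : ∀ i, v i ∈ Set.Icc β 1) (hn : 2 ≤ β * (n:ℝ)) (i : Fin n) :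
    |mui α (wRank1 v) i - (∑ l, v l) * pn α n * v i| ≤
      (1/β) * ((∑ l, v l) * pn α n * v i) / (n : ℝ) := by
  have hn0 : 0 < n := by
    rcases Nat.eq_zero_or_pos n with h | h
    · exfalso; rw [h] at hn; norm_num at hn
    · exact h
  have hnR : (0:ℝ) < n := by exact_mod_cast hn0
  have hp : 0 < pn α n := pn_pos hn0
  have hW : β * n ≤ ∑ l, v l := W_ge hv
  have hvi := hv i
  have hv0 : 0 < v i := lt_of_lt_of_le hβ0 hvi.1
  rw [mui_rank1]
  have he : pn α n * (v i * ((∑ l, v l) - v i)) - (∑ l, v l) * pn α n * v i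
      = -(pn α n * v i ^ 2) := by ring
  rw [he, abs_neg, abs_of_nonneg (by positivity)]
  rw [le_div_iff₀ hnR, div_mul_eq_mul_div, le_div_iff₀ hβ0]
  have hW0 : (0:ℝ) ≤ ∑ l, v l := le_trans (by positivity) hW
  have h1 : β * n * (pn α n * v i * v i) ≤ (∑ l, v l) * (pn α n * v i * v i) :=
    mul_le_mul_of_nonneg_right hW (by positivity)
  have h2 : (∑ l, v l) * (pn α n * v i * v i) ≤ (∑ l, v l) * (pn α n * v i * 1) := by
    apply mul_le_mul_of_nonneg_left _ hW0
    exact mul_le_mul_of_nonneg_left hvi.2 (by positivity)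
  nlinarith [h1, h2]

end Aux2
section Aux3

private lemma eta_bound (α β : ℝ) {n : ℕ} (hβ0 : 0 < β)
    (v : Fin n → ℝ) (hv : ∀ i, v i ∈ Set.Icc β 1) (hn : 2 ≤ β * (n:ℝ)) (i : Fin n) :
    |etai α (wRank1 v) i - ((∑ l, v l) ^ 2 * pn α n)⁻¹| ≤
      (64/β^5 + 3/β^4) / ((n : ℝ)^3 * pn α n) := by
  have hn0 : 0 < n := by
    rcases Nat.eq_zero_or_pos n with h | h
    · exfalso; rw [h] at hn; norm_num at hn
    · exact h
  have hnR : (0:ℝ) < n := by exact_mod_cast hn0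
  have hp : 0 < pn α n := pn_pos hn0
  set p := pn α n with hpdef
  set W := ∑ l, v l with hWdef
  have hW1 : β * n ≤ W := W_ge hv
  have hW2 : (2:ℝ) ≤ W := le_trans hn hW1
  have hW0 : (0:ℝ) < W := by linarith
  have hWm : β * n / 2 ≤ W - 1 := by linarith
  have hWm0 : (0:ℝ) < W - 1 := by linarith
  have hv1 : ∀ j, β ≤ v j := fun j => (hv j).1
  have hv2 : ∀ j, v j ≤ 1 := fun j => (hv j).2
  have hv0 : ∀ j, 0 < v j := fun j => lt_of_lt_of_le hβ0 (hv1 j)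
  have hWv : ∀ j, 1 ≤ W - v j := fun j => by have := hv2 j; linarith
  -- the constant pieces
  set main : ℝ := 4 * W^3 / ((W-1)^4 * W^4 * p) with hmaindef
  set e : ℝ := 1 / (W^4 * p) with hedef
  have hWp4 : (0:ℝ) < W^4 * p := mul_pos (pow_pos hW0 4) hp
  have hmain_nn : 0 ≤ main := by
    rw [hmaindef]
    exact div_nonneg (by positivity)
      (mul_nonneg (mul_nonneg (by positivity) (by positivity)) hp.le)
  have he_nn : 0 ≤ e := by
    rw [hedef]; exact div_nonneg zero_le_one hWp4.le
  -- the target sum expression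
  have hGsum : ((W^2 * p)⁻¹ : ℝ) = ∑ j : Fin n, ∑ k : Fin n, v j * v k / (W^4 * p) := by
    simp only [← Finset.sum_div]
    rw [← Finset.sum_mul_sum]
    rw [← hWdef]
    field_simp
  have hdiff : etai α (wRank1 v) i - (W^2 * p)⁻¹ =
      ∑ j : Fin n, ∑ k : Fin n,
        ((if j ≠ k then muij α (wRank1 v) i j * muij α (wRank1 v) j k *
            muij α (wRank1 v) k i /
            (mui α (wRank1 v) i ^ 2 * mui α (wRank1 v) j * mui α (wRank1 v) k) else 0)
          - v j * v k / (W^4 * p)) := by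
    rw [hGsum]
    simp only [etai]
    rw [← Finset.sum_sub_distrib]
    exact Finset.sum_congr rfl fun j _ => (Finset.sum_sub_distrib _ _).symm
  have key : ∀ j k : Fin n,
      |(if j ≠ k then muij α (wRank1 v) i j * muij α (wRank1 v) j k *
          muij α (wRank1 v) k i /
          (mui α (wRank1 v) i ^ 2 * mui α (wRank1 v) j * mui α (wRank1 v) k) else 0)
        - v j * v k / (W^4 * p)|
      ≤ main + ((if j = k then e else 0) + (if j = i then e else 0)
          + (if k = i then e else 0)) := by
    intro j k
    have hvjk : 0 ≤ v j * v k := mul_nonneg (hv0 j).le (hv0 k).le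
    have hG_nn : 0 ≤ v j * v k / (W^4 * p) :=
      div_nonneg hvjk hWp4.le
    have hG_le : v j * v k / (W^4 * p) ≤ e := by
      rw [hedef]
      exact div_le_div₀ zero_le_one (mul_le_one₀ (hv2 j) (hv0 k).le (hv2 k))
        hWp4 le_rfl
    have hi1 : 0 ≤ (if j = i then e else 0) := by split <;> simp [he_nn]
    have hi2 : 0 ≤ (if k = i then e else 0) := by split <;> simp [he_nn]
    have hi0 : 0 ≤ (if j = k then e else 0) := by split <;> simp [he_nn]
    by_cases hjk : j = k
    · rw [if_neg (by simpa using hjk), if_pos hjk, zero_sub, abs_neg,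
        abs_of_nonneg hG_nn]
      linarith
    · by_cases hji : j = i
      · rw [if_pos hjk, muij_rank1 α v i j, if_pos hji.symm]
        simp only [zero_mul, zero_div, zero_sub, abs_neg, abs_of_nonneg hG_nn]
        rw [if_neg hjk, if_pos hji]
        linarith
      · by_cases hki : k = i
        · rw [if_pos hjk, muij_rank1 α v k i, if_pos hki]
          simp only [mul_zero, zero_div, zero_sub, abs_neg, abs_of_nonneg hG_nn]
          rw [if_neg hjk, if_neg hji, if_pos hki]
          linarith
        · -- distinct case
          have hij' : i ≠ j := fun h => hji h.symm
          have hik' : i ≠ k := fun h => hki h.symm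
          have hF : (if j ≠ k then muij α (wRank1 v) i j * muij α (wRank1 v) j k *
              muij α (wRank1 v) k i /
              (mui α (wRank1 v) i ^ 2 * mui α (wRank1 v) j * mui α (wRank1 v) k) else 0)
              = v j * v k / (((W - v i)^2 * ((W - v j) * (W - v k))) * p) := by
            rw [if_pos hjk, muij_rank1 α v i j, muij_rank1 α v j k, muij_rank1 α v k i,
              mui_rank1 α v i, mui_rank1 α v j, mui_rank1 α v k,
              if_neg hij', if_neg hjk, if_neg hki, ← hpdef, ← hWdef]
            have h1 : W - v i ≠ 0 := by have := hWv i; linarith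
            have h2 : W - v j ≠ 0 := by have := hWv j; linarith
            have h3 : W - v k ≠ 0 := by have := hWv k; linarith
            have h4 : v i ≠ 0 := (hv0 i).ne'
            have h5 : v j ≠ 0 := (hv0 j).ne'
            have h6 : v k ≠ 0 := (hv0 k).ne'
            field_simp
          rw [hF]
          obtain ⟨hD1, hD2⟩ := D4_bounds hW2 (hv0 i).le (hv2 i) (hv0 j).le (hv2 j)
            (hv0 k).le (hv2 k)
          have := diff_bound4 p W ((W - v i)^2 * ((W - v j) * (W - v k))) (v j * v k)
            hp hW2 hD1 hD2 hvjk (mul_le_one₀ (hv2 j) (hv0 k).le (hv2 k))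
          rw [if_neg hjk, if_neg hji, if_neg hki]
          rw [hmaindef]
          linarith
  -- sum the bounds
  have habs : |etai α (wRank1 v) i - (W^2 * p)⁻¹| ≤
      ∑ j : Fin n, ∑ k : Fin n, (main + ((if j = k then e else 0)
        + (if j = i then e else 0) + (if k = i then e else 0))) := by
    rw [hdiff]
    refine le_trans (Finset.abs_sum_le_sum_abs _ _) ?_
    refine le_trans (Finset.sum_le_sum fun j _ => Finset.abs_sum_le_sum_abs _ _) ?_
    exact Finset.sum_le_sum fun j _ => Finset.sum_le_sum fun k _ => key j k
  have hsumB : ∑ j : Fin n, ∑ k : Fin n, (main + ((if j = k then e else 0)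
      + (if j = i then e else 0) + (if k = i then e else 0)))
      = (n:ℝ)^2 * main + 3 * ((n:ℝ) * e) := by
    simp [Finset.sum_add_distrib, Finset.sum_const, Finset.card_univ,
      Finset.sum_ite_eq, Finset.sum_ite_eq']
    ring
  have hb1 : (n:ℝ)^2 * main ≤ (64/β^5) / ((n:ℝ)^3 * p) := by
    have : (n:ℝ)^2 * main = ((n:ℝ)^2 * (4 * W^3)) / ((W-1)^4 * W^4 * p) := by
      rw [hmaindef]; ring
    rw [this]
    have hrw : (W-1)^4 * W^4 * p = ((W-1)^4 * W^4) * p := by ring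
    rw [hrw]
    apply div_p_le _ _ _ _ _ hp (by positivity) (by positivity)
    rw [div_mul_eq_mul_div, le_div_iff₀ (by positivity : (0:ℝ) < β^5)]
    have k1 : (β*n/2)^4 ≤ (W-1)^4 := pow_le_pow_left₀ (by positivity) hWm 4
    have k2 : (β*n) * W^3 ≤ W * W^3 := mul_le_mul_of_nonneg_right hW1 (by positivity)
    have k3 : (β*n/2)^4 * ((β*n) * W^3) ≤ (W-1)^4 * (W * W^3) :=
      mul_le_mul k1 k2 (by positivity) (by positivity)
    calc (n:ℝ)^2 * (4 * W^3) * (n:ℝ)^3 * β^5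
        = 64 * ((β*n/2)^4 * ((β*n) * W^3)) := by ring
      _ ≤ 64 * ((W-1)^4 * (W * W^3)) := by linarith
      _ = 64 * ((W-1)^4 * W^4) := by ring
  have hb2 : 3 * ((n:ℝ) * e) ≤ (3/β^4) / ((n:ℝ)^3 * p) := by
    have : 3 * ((n:ℝ) * e) = (3 * (n:ℝ)) / (W^4 * p) := by rw [hedef]; ring
    rw [this]
    apply div_p_le _ _ _ _ _ hp (by positivity) (by positivity)
    rw [div_mul_eq_mul_div, le_div_iff₀ (by positivity : (0:ℝ) < β^4)]
    have k1 : (β*n)^4 ≤ W^4 := pow_le_pow_left₀ (by positivity) hW1 4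
    calc 3 * (n:ℝ) * (n:ℝ)^3 * β^4 = 3 * (β*n)^4 := by ring
      _ ≤ 3 * W^4 := by linarith
  calc |etai α (wRank1 v) i - (W^2 * p)⁻¹| ≤ (n:ℝ)^2 * main + 3 * ((n:ℝ) * e) := by
        rw [← hsumB]; exact habs
    _ ≤ (64/β^5) / ((n:ℝ)^3 * p) + (3/β^4) / ((n:ℝ)^3 * p) := by linarith
    _ = (64/β^5 + 3/β^4) / ((n:ℝ)^3 * p) := (add_div _ _ _).symm

end Aux3
section Aux4

private lemma gamma_bound (α β : ℝ) {n : ℕ} (hβ0 : 0 < β)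
    (v : Fin n → ℝ) (hv : ∀ i, v i ∈ Set.Icc β 1) (hn : 2 ≤ β * (n:ℝ))
    (i j : Fin n) (hij : i ≠ j) :
    |gammaij α (wRank1 v) i j - ((∑ l, v l) ^ 2 * pn α n)⁻¹| ≤
      (24/β^4 + 2/β^3) / ((n : ℝ)^3 * pn α n) := by
  have hn0 : 0 < n := by
    rcases Nat.eq_zero_or_pos n with h | h
    · exfalso; rw [h] at hn; norm_num at hn
    · exact h
  have hnR : (0:ℝ) < n := by exact_mod_cast hn0
  have hp : 0 < pn α n := pn_pos hn0
  set p := pn α n with hpdef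
  set W := ∑ l, v l with hWdef
  have hW1 : β * n ≤ W := W_ge hv
  have hW2 : (2:ℝ) ≤ W := le_trans hn hW1
  have hW0 : (0:ℝ) < W := by linarith
  have hWm : β * n / 2 ≤ W - 1 := by linarith
  have hWm0 : (0:ℝ) < W - 1 := by linarith
  have hv1 : ∀ a, β ≤ v a := fun a => (hv a).1
  have hv2 : ∀ a, v a ≤ 1 := fun a => (hv a).2
  have hv0 : ∀ a, 0 < v a := fun a => lt_of_lt_of_le hβ0 (hv1 a)
  have hWv : ∀ a, 1 ≤ W - v a := fun a => by have := hv2 a; linarith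
  set main : ℝ := 3 * W^2 / ((W-1)^3 * W^3 * p) with hmaindef
  set e : ℝ := 1 / (W^3 * p) with hedef
  have hWp3 : (0:ℝ) < W^3 * p := mul_pos (pow_pos hW0 3) hp
  have hmain_nn : 0 ≤ main := by
    rw [hmaindef]
    exact div_nonneg (by positivity)
      (mul_nonneg (mul_nonneg (by positivity) (by positivity)) hp.le)
  have he_nn : 0 ≤ e := by
    rw [hedef]; exact div_nonneg zero_le_one hWp3.le
  have hGsum : ((W^2 * p)⁻¹ : ℝ) = ∑ k : Fin n, v k / (W^3 * p) := by
    rw [← Finset.sum_div, ← hWdef]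
    field_simp
  have hdiff : gammaij α (wRank1 v) i j - (W^2 * p)⁻¹ =
      ∑ k : Fin n,
        ((if k ≠ i ∧ k ≠ j then muij α (wRank1 v) j k * muij α (wRank1 v) k i /
            (mui α (wRank1 v) i * mui α (wRank1 v) j * mui α (wRank1 v) k) else 0)
          - v k / (W^3 * p)) := by
    rw [hGsum]
    simp only [gammaij]
    rw [← Finset.sum_sub_distrib]
  have key : ∀ k : Fin n,
      |(if k ≠ i ∧ k ≠ j then muij α (wRank1 v) j k * muij α (wRank1 v) k i /
          (mui α (wRank1 v) i * mui α (wRank1 v) j * mui α (wRank1 v) k) else 0)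
        - v k / (W^3 * p)|
      ≤ main + ((if k = i then e else 0) + (if k = j then e else 0)) := by
    intro k
    have hG_nn : 0 ≤ v k / (W^3 * p) := div_nonneg (hv0 k).le hWp3.le
    have hG_le : v k / (W^3 * p) ≤ e := by
      rw [hedef]
      exact div_le_div₀ zero_le_one (hv2 k) hWp3 le_rfl
    have hi1 : 0 ≤ (if k = i then e else 0) := by split <;> simp [he_nn]
    have hi2 : 0 ≤ (if k = j then e else 0) := by split <;> simp [he_nn]
    by_cases hki : k = i
    · rw [if_neg (by simp [hki]), if_pos hki, zero_sub, abs_neg, abs_of_nonneg hG_nn]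
      linarith
    · by_cases hkj : k = j
      · rw [if_neg (by simp [hkj]), if_neg hki, if_pos hkj, zero_sub, abs_neg,
          abs_of_nonneg hG_nn]
        linarith
      · have hF : (if k ≠ i ∧ k ≠ j then muij α (wRank1 v) j k * muij α (wRank1 v) k i /
            (mui α (wRank1 v) i * mui α (wRank1 v) j * mui α (wRank1 v) k) else 0)
            = v k / (((W - v i) * ((W - v j) * (W - v k))) * p) := by
          rw [if_pos ⟨hki, hkj⟩, muij_rank1 α v j k, muij_rank1 α v k i,
            mui_rank1 α v i, mui_rank1 α v j, mui_rank1 α v k,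
            if_neg (fun h => hkj h.symm), if_neg hki, ← hpdef, ← hWdef]
          have h1 : W - v i ≠ 0 := by have := hWv i; linarith
          have h2 : W - v j ≠ 0 := by have := hWv j; linarith
          have h3 : W - v k ≠ 0 := by have := hWv k; linarith
          have h4 : v i ≠ 0 := (hv0 i).ne'
          have h5 : v j ≠ 0 := (hv0 j).ne'
          have h6 : v k ≠ 0 := (hv0 k).ne'
          field_simp
        rw [hF]
        obtain ⟨hD1, hD2⟩ := D3_bounds hW2 (hv0 i).le (hv2 i) (hv0 j).le (hv2 j)
          (hv0 k).le (hv2 k)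
        have := diff_bound3 p W ((W - v i) * ((W - v j) * (W - v k))) (v k)
          hp hW2 hD1 hD2 (hv0 k).le (hv2 k)
        rw [if_neg hki, if_neg hkj]
        rw [hmaindef]
        linarith
  have habs : |gammaij α (wRank1 v) i j - (W^2 * p)⁻¹| ≤
      ∑ k : Fin n, (main + ((if k = i then e else 0) + (if k = j then e else 0))) := by
    rw [hdiff]
    refine le_trans (Finset.abs_sum_le_sum_abs _ _) ?_
    exact Finset.sum_le_sum fun k _ => key k
  have hsumB : ∑ k : Fin n, (main + ((if k = i then e else 0) + (if k = j then e else 0)))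
      = (n:ℝ) * main + 2 * e := by
    simp [Finset.sum_add_distrib, Finset.sum_const, Finset.card_univ,
      Finset.sum_ite_eq, Finset.sum_ite_eq']
    ring
  have hb1 : (n:ℝ) * main ≤ (24/β^4) / ((n:ℝ)^3 * p) := by
    have : (n:ℝ) * main = ((n:ℝ) * (3 * W^2)) / (((W-1)^3 * W^3) * p) := by
      rw [hmaindef]; ring
    rw [this]
    apply div_p_le _ _ _ _ _ hp (by positivity) (by positivity)
    rw [div_mul_eq_mul_div, le_div_iff₀ (by positivity : (0:ℝ) < β^4)]
    have k1 : (β*n/2)^3 ≤ (W-1)^3 := pow_le_pow_left₀ (by positivity) hWm 3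
    have k2 : (β*n) * W^2 ≤ W * W^2 := mul_le_mul_of_nonneg_right hW1 (by positivity)
    have k3 : (β*n/2)^3 * ((β*n) * W^2) ≤ (W-1)^3 * (W * W^2) :=
      mul_le_mul k1 k2 (by positivity) (by positivity)
    calc (n:ℝ) * (3 * W^2) * (n:ℝ)^3 * β^4
        = 24 * ((β*n/2)^3 * ((β*n) * W^2)) := by ring
      _ ≤ 24 * ((W-1)^3 * (W * W^2)) := by linarith
      _ = 24 * ((W-1)^3 * W^3) := by ring
  have hb2 : 2 * e ≤ (2/β^3) / ((n:ℝ)^3 * p) := by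
    have : 2 * e = 2 / (W^3 * p) := by rw [hedef]; ring
    rw [this]
    apply div_p_le _ _ _ _ _ hp (by positivity) (by positivity)
    rw [div_mul_eq_mul_div, le_div_iff₀ (by positivity : (0:ℝ) < β^3)]
    have k1 : (β*n)^3 ≤ W^3 := pow_le_pow_left₀ (by positivity) hW1 3
    calc 2 * (n:ℝ)^3 * β^3 = 2 * (β*n)^3 := by ring
      _ ≤ 2 * W^3 := by linarith
  calc |gammaij α (wRank1 v) i j - (W^2 * p)⁻¹| ≤ (n:ℝ) * main + 2 * e := by
        rw [← hsumB]; exact habs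
    _ ≤ (24/β^4) / ((n:ℝ)^3 * p) + (2/β^3) / ((n:ℝ)^3 * p) := by linarith
    _ = (24/β^4 + 2/β^3) / ((n:ℝ)^3 * p) := (add_div _ _ _).symm

end Aux4
section Aux5

private lemma v1_term_bounds (α β : ℝ) {n : ℕ} (hβ0 : 0 < β) (hα0 : 0 ≤ α)
    (v : Fin n → ℝ) (hv : ∀ i, v i ∈ Set.Icc β 1) (hn : 2 ≤ β * (n:ℝ))
    (i j k : Fin n) (hij : i ≠ j) (hjk : j ≠ k) (hik : i ≠ k) :
    (1 - pn α n)^3 / ((∑ l, v l)^6 * pn α n ^ 3) ≤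
      muij α (wRank1 v) i j * (1 - muij α (wRank1 v) i j) *
        (muij α (wRank1 v) j k * (1 - muij α (wRank1 v) j k)) *
        (muij α (wRank1 v) k i * (1 - muij α (wRank1 v) k i)) /
        (mui α (wRank1 v) i ^ 2 * mui α (wRank1 v) j ^ 2 * mui α (wRank1 v) k ^ 2) ∧
    muij α (wRank1 v) i j * (1 - muij α (wRank1 v) i j) *
        (muij α (wRank1 v) j k * (1 - muij α (wRank1 v) j k)) *
        (muij α (wRank1 v) k i * (1 - muij α (wRank1 v) k i)) /
        (mui α (wRank1 v) i ^ 2 * mui α (wRank1 v) j ^ 2 * mui α (wRank1 v) k ^ 2)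
      ≤ 1 / (((∑ l, v l) - 1)^6 * pn α n ^ 3) := by
  have hn0 : 0 < n := by
    rcases Nat.eq_zero_or_pos n with h | h
    · exfalso; rw [h] at hn; norm_num at hn
    · exact h
  have hp : 0 < pn α n := pn_pos hn0
  have hp1 : pn α n ≤ 1 := pn_le_one hα0 hn0
  set p := pn α n with hpdef
  set W := ∑ l, v l with hWdef
  have hW1 : β * n ≤ W := W_ge hv
  have hW2 : (2:ℝ) ≤ W := le_trans hn hW1
  have hW0 : (0:ℝ) < W := by linarith
  have hv1 : ∀ a, β ≤ v a := fun a => (hv a).1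
  have hv2 : ∀ a, v a ≤ 1 := fun a => (hv a).2
  have hv0 : ∀ a, 0 < v a := fun a => lt_of_lt_of_le hβ0 (hv1 a)
  have hWv : ∀ a, 1 ≤ W - v a := fun a => by have := hv2 a; linarith
  -- rewrite the term
  have hT : muij α (wRank1 v) i j * (1 - muij α (wRank1 v) i j) *
        (muij α (wRank1 v) j k * (1 - muij α (wRank1 v) j k)) *
        (muij α (wRank1 v) k i * (1 - muij α (wRank1 v) k i)) /
        (mui α (wRank1 v) i ^ 2 * mui α (wRank1 v) j ^ 2 * mui α (wRank1 v) k ^ 2)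
      = (1 - muij α (wRank1 v) i j) * ((1 - muij α (wRank1 v) j k) *
          (1 - muij α (wRank1 v) k i)) /
          (((W - v i)^2 * ((W - v j)^2 * (W - v k)^2)) * p^3) := by
    rw [muij_rank1 α v i j, muij_rank1 α v j k, muij_rank1 α v k i,
      mui_rank1 α v i, mui_rank1 α v j, mui_rank1 α v k,
      if_neg hij, if_neg hjk, if_neg (fun h => hik h.symm), ← hpdef, ← hWdef]
    have h1 : W - v i ≠ 0 := by have := hWv i; linarith
    have h2 : W - v j ≠ 0 := by have := hWv j; linarith
    have h3 : W - v k ≠ 0 := by have := hWv k; linarith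
    have h4 : v i ≠ 0 := (hv0 i).ne'
    have h5 : v j ≠ 0 := (hv0 j).ne'
    have h6 : v k ≠ 0 := (hv0 k).ne'
    field_simp
  have hmu_mem : ∀ a b : Fin n, a ≠ b →
      0 ≤ muij α (wRank1 v) a b ∧ muij α (wRank1 v) a b ≤ p := by
    intro a b hab
    rw [muij_rank1 α v a b, if_neg hab, ← hpdef]
    constructor
    · exact mul_nonneg hp.le (mul_nonneg (hv0 a).le (hv0 b).le)
    · calc p * (v a * v b) ≤ p * 1 :=
            mul_le_mul_of_nonneg_left (mul_le_one₀ (hv2 a) (hv0 b).le (hv2 b)) hp.le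
        _ = p := mul_one p
  obtain ⟨m1, m1'⟩ := hmu_mem i j hij
  obtain ⟨m2, m2'⟩ := hmu_mem j k hjk
  obtain ⟨m3, m3'⟩ := hmu_mem k i (fun h => hik h.symm)
  have f1 : 1 - p ≤ 1 - muij α (wRank1 v) i j := by linarith
  have f2 : 1 - p ≤ 1 - muij α (wRank1 v) j k := by linarith
  have f3 : 1 - p ≤ 1 - muij α (wRank1 v) k i := by linarith
  have g1 : 1 - muij α (wRank1 v) i j ≤ 1 := by linarith
  have g2 : 1 - muij α (wRank1 v) j k ≤ 1 := by linarith
  have g3 : 1 - muij α (wRank1 v) k i ≤ 1 := by linarith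
  have hp0 : (0:ℝ) ≤ 1 - p := by linarith
  have hN_low : (1 - p)^3 ≤ (1 - muij α (wRank1 v) i j) * ((1 - muij α (wRank1 v) j k) *
      (1 - muij α (wRank1 v) k i)) := by
    calc (1-p)^3 = (1-p) * ((1-p) * (1-p)) := by ring
      _ ≤ _ := mul_le_mul f1 (mul_le_mul f2 f3 hp0 (by linarith))
          (mul_nonneg hp0 hp0) (by linarith)
  have hN_up : (1 - muij α (wRank1 v) i j) * ((1 - muij α (wRank1 v) j k) *
      (1 - muij α (wRank1 v) k i)) ≤ 1 :=
    mul_le_one₀ g1 (mul_nonneg (by linarith) (by linarith))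
      (mul_le_one₀ g2 (by linarith) g3)
  have hN_nn : 0 ≤ (1 - muij α (wRank1 v) i j) * ((1 - muij α (wRank1 v) j k) *
      (1 - muij α (wRank1 v) k i)) :=
    mul_nonneg (by linarith) (mul_nonneg (by linarith) (by linarith))
  -- denominator bounds
  have hsq : ∀ a : Fin n, (W-1)^2 ≤ (W - v a)^2 ∧ (W - v a)^2 ≤ W^2 := by
    intro a
    have := hWv a
    have hva := hv0 a
    have hva2 := hv2 a
    constructor
    · exact pow_le_pow_left₀ (by linarith) (by linarith) 2
    · exact pow_le_pow_left₀ (by linarith) (by linarith) 2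
  have hD_low : (W-1)^6 ≤ (W - v i)^2 * ((W - v j)^2 * (W - v k)^2) := by
    have h0 : (0:ℝ) ≤ (W-1)^2 := sq_nonneg _
    calc (W-1)^6 = (W-1)^2 * ((W-1)^2 * (W-1)^2) := by ring
      _ ≤ _ := mul_le_mul (hsq i).1 (mul_le_mul (hsq j).1 (hsq k).1 h0 (sq_nonneg _))
          (mul_nonneg h0 h0) (sq_nonneg _)
  have hD_up : (W - v i)^2 * ((W - v j)^2 * (W - v k)^2) ≤ W^6 := by
    calc (W - v i)^2 * ((W - v j)^2 * (W - v k)^2)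
        ≤ W^2 * (W^2 * W^2) := mul_le_mul (hsq i).2
          (mul_le_mul (hsq j).2 (hsq k).2 (sq_nonneg _) (sq_nonneg _))
          (mul_nonneg (sq_nonneg _) (sq_nonneg _)) (sq_nonneg _)
      _ = W^6 := by ring
  have hWm6 : (0:ℝ) < (W-1)^6 := pow_pos (by linarith) 6
  have hDpos : (0:ℝ) < (W - v i)^2 * ((W - v j)^2 * (W - v k)^2) :=
    lt_of_lt_of_le hWm6 hD_low
  have hp3 : (0:ℝ) < p^3 := pow_pos hp 3
  rw [hT]
  constructor
  · apply div_le_div₀ hN_nn hN_low (mul_pos hDpos hp3)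
    exact mul_le_mul_of_nonneg_right hD_up hp3.le
  · apply div_le_div₀ zero_le_one hN_up (mul_pos hWm6 hp3)
    exact mul_le_mul_of_nonneg_right hD_low hp3.le

private lemma const_triple_sum {n : ℕ} (c : ℝ) :
    ∑ i : Fin n, ∑ j : Fin n, ∑ k : Fin n, (if i < j ∧ j < k then c else 0)
      = c * ((n:ℝ) * (n - 1) * (n - 2) / 6) := by
  rw [← count3_fin n, Finset.mul_sum]
  refine Finset.sum_congr rfl fun i _ => ?_
  rw [Finset.mul_sum]
  refine Finset.sum_congr rfl fun j _ => ?_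
  rw [Finset.mul_sum]
  refine Finset.sum_congr rfl fun k _ => ?_
  split <;> simp

private lemma v1sq_bounds (α β : ℝ) {n : ℕ} (hβ0 : 0 < β) (hα0 : 0 ≤ α)
    (v : Fin n → ℝ) (hv : ∀ i, v i ∈ Set.Icc β 1) (hn : 2 ≤ β * (n:ℝ)) :
    (1 - pn α n)^3 / ((∑ l, v l)^6 * pn α n ^ 3) * ((n:ℝ) * (n - 1) * (n - 2) / 6)
      ≤ v1sq α (wRank1 v) ∧
    v1sq α (wRank1 v) ≤
      1 / (((∑ l, v l) - 1)^6 * pn α n ^ 3) * ((n:ℝ) * (n - 1) * (n - 2) / 6) := by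
  constructor
  · rw [← const_triple_sum]
    simp only [v1sq]
    refine Finset.sum_le_sum fun i _ => Finset.sum_le_sum fun j _ =>
      Finset.sum_le_sum fun k _ => ?_
    by_cases h : i < j ∧ j < k
    · rw [if_pos h, if_pos h]
      exact (v1_term_bounds α β hβ0 hα0 v hv hn i j k (ne_of_lt h.1) (ne_of_lt h.2)
        (ne_of_lt (lt_trans h.1 h.2))).1
    · rw [if_neg h, if_neg h]
  · rw [← const_triple_sum]
    simp only [v1sq]
    refine Finset.sum_le_sum fun i _ => Finset.sum_le_sum fun j _ =>
      Finset.sum_le_sum fun k _ => ?_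
    by_cases h : i < j ∧ j < k
    · rw [if_pos h, if_pos h]
      exact (v1_term_bounds α β hβ0 hα0 v hv hn i j k (ne_of_lt h.1) (ne_of_lt h.2)
        (ne_of_lt (lt_trans h.1 h.2))).2
    · rw [if_neg h, if_neg h]

end Aux5
section Aux6

private lemma mu01 (α β : ℝ) {n : ℕ} (hβ0 : 0 < β) (hα0 : 0 ≤ α) (hn0 : 0 < n)
    (v : Fin n → ℝ) (hv : ∀ i, v i ∈ Set.Icc β 1) (a b : Fin n) :
    0 ≤ muij α (wRank1 v) a b ∧ muij α (wRank1 v) a b ≤ 1 := by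
  have hp : 0 < pn α n := pn_pos hn0
  have hp1 : pn α n ≤ 1 := pn_le_one hα0 hn0
  have hv0 : ∀ a, 0 < v a := fun a => lt_of_lt_of_le hβ0 (hv a).1
  rw [muij_rank1]
  split
  · norm_num
  · constructor
    · exact mul_nonneg hp.le (mul_nonneg (hv0 a).le (hv0 b).le)
    · calc pn α n * (v a * v b) ≤ 1 * 1 :=
          mul_le_mul hp1 (mul_le_one₀ (hv a).2 (hv0 b).le (hv b).2)
            (mul_nonneg (hv0 a).le (hv0 b).le) zero_le_one
        _ = 1 := by norm_num

private lemma v1sq_nonneg (α β : ℝ) {n : ℕ} (hβ0 : 0 < β) (hα0 : 0 ≤ α) (hn0 : 0 < n)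
    (v : Fin n → ℝ) (hv : ∀ i, v i ∈ Set.Icc β 1) :
    0 ≤ v1sq α (wRank1 v) := by
  simp only [v1sq]
  refine Finset.sum_nonneg fun i _ => Finset.sum_nonneg fun j _ =>
    Finset.sum_nonneg fun k _ => ?_
  split
  · apply div_nonneg
    · obtain ⟨a1, a2⟩ := mu01 α β hβ0 hα0 hn0 v hv i j
      obtain ⟨b1, b2⟩ := mu01 α β hβ0 hα0 hn0 v hv j k
      obtain ⟨c1, c2⟩ := mu01 α β hβ0 hα0 hn0 v hv k i
      have := mul_nonneg (mul_nonneg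
        (mul_nonneg a1 (by linarith : (0:ℝ) ≤ 1 - muij α (wRank1 v) i j))
        (mul_nonneg b1 (by linarith : (0:ℝ) ≤ 1 - muij α (wRank1 v) j k)))
        (mul_nonneg c1 (by linarith : (0:ℝ) ≤ 1 - muij α (wRank1 v) k i))
      linarith [this]
    · positivity
  · exact le_rfl

private lemma v2sq_nonneg (α β : ℝ) {n : ℕ} (hβ0 : 0 < β) (hα0 : 0 ≤ α) (hn0 : 0 < n)
    (v : Fin n → ℝ) (hv : ∀ i, v i ∈ Set.Icc β 1) :
    0 ≤ v2sq α (wRank1 v) := by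
  simp only [v2sq]
  refine Finset.sum_nonneg fun i _ => Finset.sum_nonneg fun j _ => ?_
  split
  · obtain ⟨a1, a2⟩ := mu01 α β hβ0 hα0 hn0 v hv i j
    exact mul_nonneg (sq_nonneg _) (mul_nonneg a1 (by linarith))
  · exact le_rfl

private lemma v2sq_bound (α β : ℝ) {n : ℕ} (hβ0 : 0 < β) (hα0 : 0 ≤ α)
    (v : Fin n → ℝ) (hv : ∀ i, v i ∈ Set.Icc β 1) (hn : 2 ≤ β * (n:ℝ)) :
    v2sq α (wRank1 v) ≤
      (64/β^5 + 3/β^4 + 24/β^4 + 2/β^3)^2 / ((n:ℝ)^4 * pn α n) := by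
  have hn0 : 0 < n := by
    rcases Nat.eq_zero_or_pos n with h | h
    · exfalso; rw [h] at hn; norm_num at hn
    · exact h
  have hnR : (0:ℝ) < n := by exact_mod_cast hn0
  have hp : 0 < pn α n := pn_pos hn0
  have hp1 : pn α n ≤ 1 := pn_le_one hα0 hn0
  set p := pn α n with hpdef
  set K : ℝ := 64/β^5 + 3/β^4 + 24/β^4 + 2/β^3 with hKdef
  have hK0 : 0 < K := by rw [hKdef]; positivity
  set b : ℝ := K / ((n:ℝ)^3 * p) with hbdef
  have hb0 : 0 < b := by
    rw [hbdef]; exact div_pos hK0 (mul_pos (pow_pos hnR 3) hp)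
  have key : ∀ i j : Fin n, i < j →
      (gammaij α (wRank1 v) i j - (etai α (wRank1 v) i + etai α (wRank1 v) j) / 2) ^ 2 *
        (muij α (wRank1 v) i j * (1 - muij α (wRank1 v) i j)) ≤ b^2 * p := by
    intro i j hij
    set c : ℝ := ((∑ l, v l) ^ 2 * p)⁻¹ with hcdef
    have hγ := gamma_bound α β hβ0 v hv hn i j (ne_of_lt hij)
    have hηi := eta_bound α β hβ0 v hv hn i
    have hηj := eta_bound α β hβ0 v hv hn j
    rw [← hpdef] at hγ hηi hηj
    have habs : |gammaij α (wRank1 v) i j -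
        (etai α (wRank1 v) i + etai α (wRank1 v) j) / 2| ≤ b := by
      have h0 : gammaij α (wRank1 v) i j -
          (etai α (wRank1 v) i + etai α (wRank1 v) j) / 2
          = (gammaij α (wRank1 v) i j - c) -
            ((etai α (wRank1 v) i - c) + (etai α (wRank1 v) j - c)) / 2 := by
        rw [hcdef]; ring
      rw [h0]
      have h1 := abs_sub (gammaij α (wRank1 v) i j - c)
        (((etai α (wRank1 v) i - c) + (etai α (wRank1 v) j - c)) / 2)
      have h2 : |((etai α (wRank1 v) i - c) + (etai α (wRank1 v) j - c)) / 2|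
          ≤ (|etai α (wRank1 v) i - c| + |etai α (wRank1 v) j - c|) / 2 := by
        rw [abs_div]
        simp only [abs_two]
        exact div_le_div_of_nonneg_right (abs_add_le _ _) (by norm_num) |>.trans le_rfl
      rw [hbdef, hKdef]
      have : (64/β^5 + 3/β^4 + 24/β^4 + 2/β^3) / ((n:ℝ)^3 * p)
          = (24/β^4 + 2/β^3) / ((n:ℝ)^3 * p)
            + ((64/β^5 + 3/β^4) / ((n:ℝ)^3 * p) + (64/β^5 + 3/β^4) / ((n:ℝ)^3 * p)) / 2 := by
        field_simp
        ring
      rw [this]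
      have hc' : c = ((∑ l, v l) ^ 2 * p)⁻¹ := hcdef
      calc |gammaij α (wRank1 v) i j - c -
            ((etai α (wRank1 v) i - c) + (etai α (wRank1 v) j - c)) / 2|
          ≤ |gammaij α (wRank1 v) i j - c|
            + |((etai α (wRank1 v) i - c) + (etai α (wRank1 v) j - c)) / 2| := h1
        _ ≤ (24/β^4 + 2/β^3) / ((n:ℝ)^3 * p)
            + (|etai α (wRank1 v) i - c| + |etai α (wRank1 v) j - c|) / 2 := by
            rw [hcdef] at *
            linarith
        _ ≤ _ := by
            rw [hcdef] at *
            have := hηi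
            have := hηj
            linarith
    have hsq : (gammaij α (wRank1 v) i j -
        (etai α (wRank1 v) i + etai α (wRank1 v) j) / 2) ^ 2 ≤ b^2 := by
      rw [← sq_abs]
      exact pow_le_pow_left₀ (abs_nonneg _) habs 2
    have hmu := mu01 α β hβ0 hα0 hn0 v hv i j
    have hmup : muij α (wRank1 v) i j ≤ p := by
      rw [muij_rank1, if_neg (ne_of_lt hij), ← hpdef]
      have hv0 : ∀ a, 0 < v a := fun a => lt_of_lt_of_le hβ0 (hv a).1
      calc p * (v i * v j) ≤ p * 1 :=
          mul_le_mul_of_nonneg_left (mul_le_one₀ (hv i).2 (hv0 j).le (hv j).2) hp.le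
        _ = p := mul_one p
    have hmm : muij α (wRank1 v) i j * (1 - muij α (wRank1 v) i j) ≤ p := by
      calc muij α (wRank1 v) i j * (1 - muij α (wRank1 v) i j)
          ≤ muij α (wRank1 v) i j * 1 :=
            mul_le_mul_of_nonneg_left (by linarith [hmu.1]) hmu.1
        _ = muij α (wRank1 v) i j := mul_one _
        _ ≤ p := hmup
    have hmm0 : 0 ≤ muij α (wRank1 v) i j * (1 - muij α (wRank1 v) i j) :=
      mul_nonneg hmu.1 (by linarith [hmu.2])
    exact mul_le_mul hsq hmm hmm0 (by positivity)
  have hstep : v2sq α (wRank1 v) ≤ (n:ℝ)^2 * (b^2 * p) := by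
    have : ((n:ℝ)^2 * (b^2 * p)) = ∑ _i : Fin n, ∑ _j : Fin n, (b^2 * p) := by
      simp [Finset.sum_const, Finset.card_univ]
      ring
    rw [this]
    simp only [v2sq]
    refine Finset.sum_le_sum fun i _ => Finset.sum_le_sum fun j _ => ?_
    split
    · next h => exact key i j h
    · exact mul_nonneg (sq_nonneg b) hp.le
  calc v2sq α (wRank1 v) ≤ (n:ℝ)^2 * (b^2 * p) := hstep
    _ = K^2 / ((n:ℝ)^4 * p) := by
        rw [hbdef]
        field_simp
    _ ≤ K^2 / ((n:ℝ)^4 * p) := le_rfl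

end Aux6
set_option maxHeartbeats 1000000 in
/-- Deterministic asymptotics in the rank-1 model `w_{ij} = w_i w_j`:
`μ_i = w p_n w_i (1 + O(1/n))`, `η_i = 1/(w² p_n) + O(1/(n³ p_n))`,
`γ_{ij} = 1/(w² p_n) + O(1/(n³ p_n))` uniformly in the indices, and consequently
`v_{1n}² = (n³/(6 w⁶ p_n³))(1 + o(1))`, `v_{2n}² = O(1/(n⁴ p_n))`, and
`v_{2n}² = o(v_{1n}²)`, where `w = ∑_i w_i`. -/
theorem rank1_deterministic_asymptotics
    (α β : ℝ) (hα : α ∈ Set.Ioo (0 : ℝ) 1) (hβ : β ∈ Set.Ioo (0 : ℝ) 1)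
    (v : (n : ℕ) → Fin n → ℝ) (hv : ∀ n i, v n i ∈ Set.Icc β 1) :
    (∃ C : ℝ, 0 < C ∧ ∃ N : ℕ, ∀ n ≥ N, ∀ i : Fin n,
      |mui α (wRank1 (v n)) i - (∑ l, v n l) * pn α n * v n i| ≤
        C * ((∑ l, v n l) * pn α n * v n i) / (n : ℝ)) ∧
    (∃ C : ℝ, 0 < C ∧ ∃ N : ℕ, ∀ n ≥ N, ∀ i : Fin n,
      |etai α (wRank1 (v n)) i - ((∑ l, v n l) ^ 2 * pn α n)⁻¹| ≤
        C / ((n : ℝ) ^ 3 * pn α n)) ∧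
    (∃ C : ℝ, 0 < C ∧ ∃ N : ℕ, ∀ n ≥ N, ∀ i j : Fin n, i ≠ j →
      |gammaij α (wRank1 (v n)) i j - ((∑ l, v n l) ^ 2 * pn α n)⁻¹| ≤
        C / ((n : ℝ) ^ 3 * pn α n)) ∧
    Tendsto (fun n => v1sq α (wRank1 (v n)) /
      ((n : ℝ) ^ 3 / (6 * (∑ l, v n l) ^ 6 * pn α n ^ 3))) atTop (𝓝 1) ∧
    (∃ C : ℝ, 0 < C ∧ ∃ N : ℕ, ∀ n ≥ N,
      v2sq α (wRank1 (v n)) ≤ C / ((n : ℝ) ^ 4 * pn α n)) ∧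
    Tendsto (fun n => v2sq α (wRank1 (v n)) / v1sq α (wRank1 (v n))) atTop (𝓝 0) := by
  obtain ⟨hα0, hα1⟩ := hα
  obtain ⟨hβ0, hβ1⟩ := hβ
  set N₀ : ℕ := ⌈(2/β : ℝ)⌉₊ with hN₀def
  have hNs : ∀ n : ℕ, N₀ ≤ n → 2 ≤ β * (n:ℝ) := by
    intro n hn
    have h1 : (2/β : ℝ) ≤ (N₀:ℝ) := Nat.le_ceil _
    have h2 : (N₀:ℝ) ≤ (n:ℝ) := by exact_mod_cast hn
    calc (2:ℝ) = β * (2/β) := by field_simp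
      _ ≤ β * (n:ℝ) := mul_le_mul_of_nonneg_left (by linarith) hβ0.le
  have hptend : Tendsto (fun n : ℕ => pn α n) atTop (𝓝 0) := by
    have h := (tendsto_rpow_neg_atTop hα0).comp
      (tendsto_natCast_atTop_atTop (R := ℝ))
    exact h
  set K : ℝ := 64/β^5 + 3/β^4 + 24/β^4 + 2/β^3 with hKdef
  have hK0 : 0 < K := by rw [hKdef]; positivity
  refine ⟨⟨1/β, by positivity, N₀, fun n hn i => mu_bound α β hβ0 (v n) (hv n) (hNs n hn) i⟩,
    ⟨64/β^5 + 3/β^4, by positivity, N₀,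
      fun n hn i => eta_bound α β hβ0 (v n) (hv n) (hNs n hn) i⟩,
    ⟨24/β^4 + 2/β^3, by positivity, N₀,
      fun n hn i j hij => gamma_bound α β hβ0 (v n) (hv n) (hNs n hn) i j hij⟩,
    ?_, ⟨K^2, by positivity, N₀,
      fun n hn => v2sq_bound α β hβ0 hα0.le (v n) (hv n) (hNs n hn)⟩, ?_⟩
  · -- part 4
    have hl : Tendsto (fun n : ℕ => (1 - 1/(n:ℝ)) * (1 - 2/(n:ℝ)) * (1 - pn α n)^3)
        atTop (𝓝 1) := by
      have h1 : Tendsto (fun n : ℕ => 1 - 1/(n:ℝ)) atTop (𝓝 (1 - 0)) :=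
        tendsto_const_nhds.sub tendsto_one_div_atTop_nhds_zero_nat
      have h2 : Tendsto (fun n : ℕ => 1 - 2/(n:ℝ)) atTop (𝓝 (1 - 0)) :=
        tendsto_const_nhds.sub (tendsto_const_div_atTop_nhds_zero_nat 2)
      have h3 : Tendsto (fun n : ℕ => (1 - pn α n)^3) atTop (𝓝 ((1 - 0)^3)) :=
        (tendsto_const_nhds.sub hptend).pow 3
      have := (h1.mul h2).mul h3
      norm_num at this
      simpa using this
    have hu : Tendsto (fun n : ℕ => (1 + 2/(β*(n:ℝ)))^6) atTop (𝓝 1) := by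
      have hb : Tendsto (fun n : ℕ => β*(n:ℝ)) atTop atTop :=
        Tendsto.const_mul_atTop hβ0 tendsto_natCast_atTop_atTop
      have h0 : Tendsto (fun n : ℕ => 2/(β*(n:ℝ))) atTop (𝓝 0) :=
        tendsto_const_nhds.div_atTop hb
      have h1 : Tendsto (fun n : ℕ => 1 + 2/(β*(n:ℝ))) atTop (𝓝 (1+0)) :=
        tendsto_const_nhds.add h0
      have := h1.pow 6
      norm_num at this
      simpa using this
    refine tendsto_of_tendsto_of_tendsto_of_le_of_le' hl hu ?_ ?_
    · filter_upwards [eventually_ge_atTop N₀] with n hn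
      have hn2 : 2 ≤ β * (n:ℝ) := hNs n hn
      have hn0 : 0 < n := by
        rcases Nat.eq_zero_or_pos n with h | h
        · exfalso; rw [h] at hn2; norm_num at hn2
        · exact h
      have hnR : (0:ℝ) < n := by exact_mod_cast hn0
      have hp : 0 < pn α n := pn_pos hn0
      have hW1 : β * n ≤ ∑ l, v n l := W_ge (hv n)
      have hW0 : (0:ℝ) < ∑ l, v n l := by linarith
      have hQ : (0:ℝ) < (n:ℝ)^3 / (6 * (∑ l, v n l)^6 * pn α n ^ 3) :=
        div_pos (pow_pos hnR 3)
          (mul_pos (mul_pos (by norm_num) (pow_pos hW0 6)) (pow_pos hp 3))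
      rw [le_div_iff₀ hQ]
      have heq : (1 - 1/(n:ℝ)) * (1 - 2/(n:ℝ)) * (1 - pn α n)^3 *
          ((n:ℝ)^3 / (6 * (∑ l, v n l)^6 * pn α n ^ 3))
          = (1 - pn α n)^3 / ((∑ l, v n l)^6 * pn α n ^ 3) *
            ((n:ℝ) * ((n:ℝ) - 1) * ((n:ℝ) - 2) / 6) := by
        field_simp
      rw [heq]
      exact (v1sq_bounds α β hβ0 hα0.le (v n) (hv n) hn2).1
    · filter_upwards [eventually_ge_atTop N₀] with n hn
      have hn2 : 2 ≤ β * (n:ℝ) := hNs n hn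
      have hn0 : 0 < n := by
        rcases Nat.eq_zero_or_pos n with h | h
        · exfalso; rw [h] at hn2; norm_num at hn2
        · exact h
      have hnR : (0:ℝ) < n := by exact_mod_cast hn0
      have hn2R : (2:ℝ) ≤ n := by nlinarith
      have hp : 0 < pn α n := pn_pos hn0
      have hW1 : β * n ≤ ∑ l, v n l := W_ge (hv n)
      have hW2 : (2:ℝ) ≤ ∑ l, v n l := le_trans hn2 hW1
      have hW0 : (0:ℝ) < ∑ l, v n l := by linarith
      have hWm0 : (0:ℝ) < (∑ l, v n l) - 1 := by linarith
      have hWm : β * (n:ℝ) / 2 ≤ (∑ l, v n l) - 1 := by linarith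
      have hQ : (0:ℝ) < (n:ℝ)^3 / (6 * (∑ l, v n l)^6 * pn α n ^ 3) :=
        div_pos (pow_pos hnR 3)
          (mul_pos (mul_pos (by norm_num) (pow_pos hW0 6)) (pow_pos hp 3))
      rw [div_le_iff₀ hQ]
      have hq : (∑ l, v n l)/((∑ l, v n l) - 1) ≤ 1 + 2/(β*(n:ℝ)) := by
        rw [div_le_iff₀ hWm0]
        have e1 : (2/(β*(n:ℝ)))*(β*(n:ℝ)/2) = 1 := by field_simp
        have e2 : (2/(β*(n:ℝ)))*(β*(n:ℝ)/2) ≤ (2/(β*(n:ℝ)))*((∑ l, v n l) - 1) :=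
          mul_le_mul_of_nonneg_left hWm (div_pos two_pos (mul_pos hβ0 hnR)).le
        nlinarith [e1, e2]
      have h6 : ((∑ l, v n l)/((∑ l, v n l) - 1))^6 ≤ (1 + 2/(β*(n:ℝ)))^6 :=
        pow_le_pow_left₀ (div_nonneg hW0.le hWm0.le) hq 6
      have hcnt : (n:ℝ) * ((n:ℝ) - 1) * ((n:ℝ) - 2) ≤ (n:ℝ)^3 := by nlinarith
      calc v1sq α (wRank1 (v n))
          ≤ 1 / (((∑ l, v n l) - 1)^6 * pn α n ^ 3) *
            ((n:ℝ) * ((n:ℝ) - 1) * ((n:ℝ) - 2) / 6) :=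
            (v1sq_bounds α β hβ0 hα0.le (v n) (hv n) hn2).2
        _ ≤ 1 / (((∑ l, v n l) - 1)^6 * pn α n ^ 3) * ((n:ℝ)^3 / 6) := by
            apply mul_le_mul_of_nonneg_left (by linarith)
            exact div_nonneg zero_le_one
              (mul_nonneg (pow_nonneg hWm0.le 6) (pow_nonneg hp.le 3))
        _ = ((∑ l, v n l)/((∑ l, v n l) - 1))^6 *
            ((n:ℝ)^3 / (6 * (∑ l, v n l)^6 * pn α n ^ 3)) := by
            field_simp
        _ ≤ (1 + 2/(β*(n:ℝ)))^6 *
            ((n:ℝ)^3 / (6 * (∑ l, v n l)^6 * pn α n ^ 3)) :=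
            mul_le_mul_of_nonneg_right h6 hQ.le
  · -- part 6
    have hK2 : Tendsto (fun n : ℕ => 192*K^2/(n:ℝ)) atTop (𝓝 0) :=
      tendsto_const_div_atTop_nhds_zero_nat _
    refine tendsto_of_tendsto_of_tendsto_of_le_of_le' tendsto_const_nhds hK2 ?_ ?_
    · filter_upwards [eventually_ge_atTop (max N₀ 1)] with n hn
      have hn0 : 0 < n := le_trans (le_max_right _ _) hn
      exact div_nonneg (v2sq_nonneg α β hβ0 hα0.le hn0 (v n) (hv n))
        (v1sq_nonneg α β hβ0 hα0.le hn0 (v n) (hv n))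
    · have hev1 : ∀ᶠ n : ℕ in atTop, pn α n ≤ 1/2 :=
        hptend.eventually (eventually_le_nhds (by norm_num))
      filter_upwards [hev1, eventually_ge_atTop N₀,
        eventually_ge_atTop 4] with n hpn hn hn4
      have hn2 : 2 ≤ β * (n:ℝ) := hNs n hn
      have hn0 : 0 < n := by omega
      have hnR : (0:ℝ) < n := by exact_mod_cast hn0
      have hn4R : (4:ℝ) ≤ n := by exact_mod_cast hn4
      have hp : 0 < pn α n := pn_pos hn0
      have hp1 : pn α n ≤ 1 := pn_le_one hα0.le hn0
      have hW1 : β * n ≤ ∑ l, v n l := W_ge (hv n)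
      have hW0 : (0:ℝ) < ∑ l, v n l := by linarith
      have hWn : (∑ l, v n l) ≤ n := W_le (hv n)
      -- lower bound for v1sq
      have h8 : ((1:ℝ)/2)^3 ≤ (1 - pn α n)^3 :=
        pow_le_pow_left₀ (by norm_num) (by linarith) 3
      have hcnt4 : (n:ℝ)^3/24 ≤ (n:ℝ) * ((n:ℝ) - 1) * ((n:ℝ) - 2) / 6 := by
        nlinarith [mul_nonneg (mul_nonneg hnR.le hnR.le)
          (by linarith : (0:ℝ) ≤ (n:ℝ) - 4)]
      have hW6 : (∑ l, v n l)^6 ≤ (n:ℝ)^6 := pow_le_pow_left₀ hW0.le hWn 6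
      have hv1low : ((n:ℝ)^3/192) / ((n:ℝ)^6 * pn α n ^ 3) ≤ v1sq α (wRank1 (v n)) := by
        have hb := (v1sq_bounds α β hβ0 hα0.le (v n) (hv n) hn2).1
        rw [div_mul_eq_mul_div] at hb
        refine le_trans ?_ hb
        apply div_le_div₀
        · apply mul_nonneg (pow_nonneg (by linarith) 3)
          apply div_nonneg _ (by norm_num)
          exact mul_nonneg (mul_nonneg hnR.le (by linarith)) (by linarith)
        · calc (n:ℝ)^3/192 = ((1:ℝ)/2)^3 * ((n:ℝ)^3/24) := by ring
            _ ≤ (1 - pn α n)^3 * ((n:ℝ) * ((n:ℝ) - 1) * ((n:ℝ) - 2) / 6) :=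
              mul_le_mul h8 hcnt4 (by positivity) (pow_nonneg (by linarith) 3)
        · exact mul_pos (pow_pos hW0 6) (pow_pos hp 3)
        · exact mul_le_mul_of_nonneg_right hW6 (pow_nonneg hp.le 3)
      have hB0 : (0:ℝ) < ((n:ℝ)^3/192) / ((n:ℝ)^6 * pn α n ^ 3) :=
        div_pos (by positivity) (mul_pos (pow_pos hnR 6) (pow_pos hp 3))
      have hv2 := v2sq_bound α β hβ0 hα0.le (v n) (hv n) hn2
      rw [← hKdef] at hv2
      calc v2sq α (wRank1 (v n)) / v1sq α (wRank1 (v n))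
          ≤ (K^2 / ((n:ℝ)^4 * pn α n)) / (((n:ℝ)^3/192) / ((n:ℝ)^6 * pn α n ^ 3)) :=
            div_le_div₀ (by positivity) hv2 hB0 hv1low
        _ = 192*K^2*(pn α n)^2/(n:ℝ) := by
            field_simp
        _ ≤ 192*K^2/(n:ℝ) := by
            apply div_le_div₀ (by positivity) ?_ hnR le_rfl
            have hp2 : pn α n ^ 2 ≤ 1 := by nlinarith
            nlinarith [mul_le_mul_of_nonneg_left hp2
              (by positivity : (0:ℝ) ≤ 192*K^2)]

end HetRG
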